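/- arXiv:math/9805048 — 4 statements merged into one kernel-verified Lean document; each statement's English description precedes it below -/
import Mathlib

section
/- If A and B are endomorphisms of a complex vector space satisfying the q-deformed so_3 relations AB² − (q+q⁻¹)BAB + B²A = −A and BA² − (q+q⁻¹)ABA + A²B = −B, then for q a primitive cube root of unity, A³ + A commutes with B. -/
/-- For `q` a primitive cube root of unity and endomorphisms `A, B` of a complex
vector space satisfying the `q`-deformed `so_3` relations (with
`C := q^{1/2} A B - q^{-1/2} B A`), the element `A^3 + A` commutes with `B`. -/
theorem stmt_2 (V : Type*) [AddCommGroup V] [Module ℂ V] (q s : ℂ)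
    (hq3 : q ^ 3 = 1) (hq1 : q ≠ 1) (hs : s ^ 2 = q)
    (A B : Module.End ℂ V)
    (h7 : A * B ^ 2 - (q + q⁻¹) • (B * A * B) + B ^ 2 * A = -A)
    (h8 : B * A ^ 2 - (q + q⁻¹) • (A * B * A) + A ^ 2 * B = -B)
    (C : Module.End ℂ V) (hC : C = s • (A * B) - s⁻¹ • (B * A)) :
    (A ^ 3 + A) * B = B * (A ^ 3 + A) := by
  have hq0 : q ≠ 0 := by rintro rfl; simp at hq3
  have hqinv : q⁻¹ = q ^ 2 :=
    inv_eq_of_mul_eq_one_right (by linear_combination hq3)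
  have hqsum : q + q⁻¹ = -1 := by
    rw [hqinv]
    have : (q - 1) * (q ^ 2 + q + 1) = 0 := by ring_nf; linear_combination hq3
    rcases mul_eq_zero.mp this with h | h
    · exact absurd (by linear_combination h) hq1
    · linear_combination h
  rw [hqsum] at h8
  have h8' : B * A ^ 2 + A * B * A + A ^ 2 * B = -B := by
    rw [← h8]; module
  have e1 : A * (B * A ^ 2 + A * B * A + A ^ 2 * B) = A * (-B) := by rw [h8']
  have e2 : (B * A ^ 2 + A * B * A + A ^ 2 * B) * A = (-B) * A := by rw [h8']
  have key : A ^ 3 * B - B * A ^ 3 = -(A * B) - -(B * A) := by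
    have := congrArg₂ (· - ·) e1 e2
    linear_combination (norm := noncomm_ring) this
  linear_combination (norm := noncomm_ring) key
end

section
/- If q is not a root of unity, the representation R_l^{(1)} of U_q(so_3) defined by R(I1)|m⟩ = i[m]|m⟩, R(I2)|m⟩ = (1/(q^m+q^{-m}))([l−m]|m+1⟩ − [l+m]|m−1⟩) on the (2l+1)-dimensional space with basis |m⟩, m = −l,…,l, is irreducible: any subspace invariant under R(I1) and R(I2) is 0 or the whole space. -/
/-!
`T1 = R(I1)` is diagonal in the basis `|m⟩` with pairwise distinct eigenvalues `i[m]`, so applying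
suitable polynomials in `R(I1)` shows that an invariant subspace contains every basis vector on
which one of its elements has a nonzero coordinate. `T2 = R(I2)` sends `|m⟩` to a combination of
`|m + 1⟩` and `|m - 1⟩` whose coefficients `[l ∓ m] / (q^m + q^{-m})` do not vanish inside the
range, because `q` is not a root of unity. Hence the basis vectors lying in a nonzero invariant
subspace form a nonempty set closed under `m ↦ m ± 1`, i.e. all of them.
-/

noncomputable section

/-- Basis vector of `Fin (n+1) → ℂ` indexed by an integer `k`;
`0` when out of range (convention `|l+1⟩ = |−l−1⟩ = 0`). -/
def e (n : ℕ) (k : ℤ) : Fin (n + 1) → ℂ := fun j => if (j : ℤ) = k then 1 else 0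

/-- `br q s (2a)` is the `q`-number `[a]` for the half-integer `a`, where `s = q^{1/2}`. -/
def br (q s : ℂ) (t : ℤ) : ℂ := (s ^ t - s ^ (-t)) / (q - q⁻¹)

section NotRootOfUnity

variable {q s : ℂ}

lemma zpow_eq_one_iff_of_not_root (hroot : ∀ k : ℕ, 0 < k → q ^ k ≠ 1) {m : ℤ} :
    q ^ m = 1 ↔ m = 0 := by
  refine ⟨fun h => by_contra fun hm => hroot m.natAbs (Int.natAbs_pos.2 hm) ?_, by rintro rfl; simp⟩
  rcases Int.natAbs_eq m with hm | hm <;> rw [hm] at h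
  · rwa [zpow_natCast] at h
  · rwa [zpow_neg, inv_eq_one, zpow_natCast] at h

lemma zpow_ne_neg_one_of_not_root (hroot : ∀ k : ℕ, 0 < k → q ^ k ≠ 1) (m : ℤ) :
    q ^ m ≠ -1 := by
  intro h
  have hm : m = 0 := by
    have h2 : q ^ (2 * m) = 1 := by rw [mul_comm, zpow_mul, h]; norm_num
    simpa using (zpow_eq_one_iff_of_not_root hroot).1 h2
  norm_num [hm] at h

lemma zpow_sub_zpow_neg_ne_zero_of_not_root (hq0 : q ≠ 0)
    (hroot : ∀ k : ℕ, 0 < k → q ^ k ≠ 1) {m : ℤ} (hm : m ≠ 0) : q ^ m - q ^ (-m) ≠ 0 := by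
  rw [sub_ne_zero, Ne, ← mul_inv_eq_one₀ (zpow_ne_zero _ hq0), ← zpow_neg, ← zpow_add₀ hq0,
    zpow_eq_one_iff_of_not_root hroot]
  omega

lemma zpow_two_mul_of_sq_eq (hs : s ^ 2 = q) (m : ℤ) : s ^ (2 * m) = q ^ m := by
  rw [zpow_mul, ← hs, zpow_two, ← pow_two]

lemma zpow_add_zpow_neg_ne_zero_of_sq_eq (hq0 : q ≠ 0) (hroot : ∀ k : ℕ, 0 < k → q ^ k ≠ 1)
    (hs : s ^ 2 = q) (m : ℤ) : s ^ m + s ^ (-m) ≠ 0 := by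
  have hs0 : s ≠ 0 := by rintro rfl; exact hq0 (by simp [← hs])
  have hinv : s ^ m * s ^ (-m) = 1 := by rw [← zpow_add₀ hs0, add_neg_cancel, zpow_zero]
  intro h
  apply zpow_ne_neg_one_of_not_root hroot m
  rw [← zpow_two_mul_of_sq_eq hs, two_mul, zpow_add₀ hs0]
  linear_combination s ^ m * h - hinv

lemma br_two_mul (hs : s ^ 2 = q) (m : ℤ) : br q s (2 * m) = (q ^ m - q ^ (-m)) / (q - q⁻¹) := by
  rw [br, ← mul_neg, zpow_two_mul_of_sq_eq hs, zpow_two_mul_of_sq_eq hs]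

lemma br_two_mul_ne_zero (hq0 : q ≠ 0) (hroot : ∀ k : ℕ, 0 < k → q ^ k ≠ 1) (hs : s ^ 2 = q)
    {m : ℤ} (hm : m ≠ 0) : br q s (2 * m) ≠ 0 := by
  rw [br_two_mul hs]
  refine div_ne_zero (zpow_sub_zpow_neg_ne_zero_of_not_root hq0 hroot hm) ?_
  simpa using zpow_sub_zpow_neg_ne_zero_of_not_root hq0 hroot one_ne_zero

lemma eq_or_mul_eq_neg_one_of_sub_inv_eq {K : Type*} [Field K] {x y : K} (hx : x ≠ 0) (hy : y ≠ 0)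
    (h : x - x⁻¹ = y - y⁻¹) : x = y ∨ x * y = -1 := by
  have : (x - y) * (x * y + 1) = 0 := by
    field_simp at h
    linear_combination h
  rcases mul_eq_zero.1 this with h | h
  · exact .inl (sub_eq_zero.1 h)
  · exact .inr (eq_neg_of_add_eq_zero_left h)

lemma br_two_mul_sub_injective (hq0 : q ≠ 0) (hroot : ∀ k : ℕ, 0 < k → q ^ k ≠ 1)
    (hs : s ^ 2 = q) (n : ℤ) : Function.Injective fun k : ℤ => br q s (2 * k - n) := by
  have hs0 : s ≠ 0 := by rintro rfl; exact hq0 (by simp [← hs])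
  have hden : q - q⁻¹ ≠ 0 := by
    simpa using zpow_sub_zpow_neg_ne_zero_of_not_root hq0 hroot one_ne_zero
  intro a b hab
  simp only [br, zpow_neg, div_left_inj' hden] at hab
  rcases eq_or_mul_eq_neg_one_of_sub_inv_eq (zpow_ne_zero _ hs0) (zpow_ne_zero _ hs0) hab with h | h
  · rw [← mul_inv_eq_one₀ (zpow_ne_zero _ hs0), ← zpow_neg, ← zpow_add₀ hs0,
      show 2 * a - n + -(2 * b - n) = 2 * (a - b) by ring, zpow_two_mul_of_sq_eq hs,
      zpow_eq_one_iff_of_not_root hroot] at h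
    omega
  · rw [← zpow_add₀ hs0, show 2 * a - n + (2 * b - n) = 2 * (a + b - n) by ring,
      zpow_two_mul_of_sq_eq hs] at h
    exact absurd h (zpow_ne_neg_one_of_not_root hroot _)

end NotRootOfUnity

open Polynomial in
lemma Submodule.aeval_apply_mem {R M : Type*} [CommSemiring R] [AddCommMonoid M] [Module R M]
    {T : Module.End R M} {p : Submodule R M} (hp : ∀ v ∈ p, T v ∈ p) (P : R[X]) {v : M}
    (hv : v ∈ p) : aeval T P v ∈ p := by
  induction P using Polynomial.induction_on' with
  | add P Q hP hQ => simpa using p.add_mem hP hQ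
  | monomial k a =>
    rw [aeval_monomial, Module.End.mul_apply, Module.algebraMap_end_apply, Module.End.pow_apply]
    exact p.smul_mem a (Set.MapsTo.iterate (f := T) hp k hv)

section Diagonal

variable {K ι : Type*} [Field K]

open Polynomial in
lemma single_one_mem_of_apply_ne_zero [Fintype ι] [DecidableEq ι] {T : Module.End K (ι → K)}
    {μ : ι → K} (hμ : Function.Injective μ) (hT : ∀ i, T (Pi.single i 1) = μ i • Pi.single i 1)
    {p : Submodule K (ι → K)} (hp : ∀ v ∈ p, T v ∈ p) {v : ι → K} (hv : v ∈ p) {j : ι}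
    (hvj : v j ≠ 0) : Pi.single j 1 ∈ p := by
  -- `P` kills every eigenvalue but `μ j`, so `aeval T P` projects onto the `j`-th coordinate.
  set P : K[X] := ∏ a ∈ Finset.univ.erase j, (X - C (μ a))
  have hPj : P.eval (μ j) ≠ 0 := by
    simp only [P, eval_prod, eval_sub, eval_X, eval_C, Finset.prod_ne_zero_iff, sub_ne_zero]
    exact fun a ha => hμ.ne (Finset.ne_of_mem_erase ha).symm
  have hPi : ∀ i ≠ j, P.eval (μ i) = 0 := fun i hi => by
    simp only [P, eval_prod, eval_sub, eval_X, eval_C]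
    exact Finset.prod_eq_zero (Finset.mem_erase.2 ⟨hi, Finset.mem_univ i⟩) (sub_self _)
  have hproj : aeval T P v = (v j * P.eval (μ j)) • Pi.single j 1 := by
    conv_lhs => rw [← (Pi.basisFun K ι).sum_repr v]
    simp only [Pi.basisFun_repr, Pi.basisFun_apply, map_sum, map_smul,
      Module.End.aeval_apply_of_mem_apply_eq_smul (hT _), smul_smul]
    exact Finset.sum_eq_single j (fun i _ hi => by simp [hPi i hi]) (by simp)
  have := Submodule.aeval_apply_mem hp P hv
  rwa [hproj, p.smul_mem_iff (mul_ne_zero hvj hPj)] at this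

lemma eq_bot_or_eq_top_of_ladder {n : ℕ} {p : Submodule K (Fin (n + 1) → K)}
    (hcomp : ∀ v ∈ p, ∀ j, v j ≠ 0 → Pi.single j 1 ∈ p) {T : Module.End K (Fin (n + 1) → K)}
    (hp : ∀ v ∈ p, T v ∈ p) (hup : ∀ k : Fin n, T (Pi.single k.castSucc 1) k.succ ≠ 0)
    (hdown : ∀ k : Fin n, T (Pi.single k.succ 1) k.castSucc ≠ 0) : p = ⊥ ∨ p = ⊤ := by
  have hiff : ∀ i, Pi.single i 1 ∈ p ↔ Pi.single 0 1 ∈ p :=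
    Fin.induction Iff.rfl fun k ih =>
      ⟨fun h => ih.1 (hcomp _ (hp _ h) _ (hdown k)), fun h => hcomp _ (hp _ (ih.2 h)) _ (hup k)⟩
  refine or_iff_not_imp_left.2 fun hbot => ?_
  obtain ⟨v, hv, hv0⟩ := p.ne_bot_iff.1 hbot
  obtain ⟨j, hj⟩ := Function.ne_iff.1 hv0
  have h0 := (hiff j).1 (hcomp v hv j hj)
  rw [eq_top_iff, ← (Pi.basisFun K _).span_eq, Submodule.span_le]
  rintro _ ⟨i, rfl⟩
  simpa using (hiff i).2 h0

end Diagonal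

lemma e_natCast (n : ℕ) (i : Fin (n + 1)) : e n (i : ℕ) = Pi.single i 1 := by
  ext j
  simp [e, Pi.single_apply, Fin.ext_iff]

/-- If `q` is not a root of unity, the representation `R_l^{(1)}` of `U_q(so_3)`
(`n = 2l`) is irreducible: any subspace invariant under `R(I1)` and `R(I2)`
is `0` or the whole `(2l+1)`-dimensional space. -/
theorem stmt_6 (q s : ℂ) (hq0 : q ≠ 0)
    (hroot : ∀ k : ℕ, 0 < k → q ^ k ≠ 1) (hs : s ^ 2 = q) (n : ℕ)
    (T1 T2 : Module.End ℂ (Fin (n + 1) → ℂ))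
    (h1 : ∀ k : ℤ, 0 ≤ k → k ≤ n →
      T1 (e n k) = (Complex.I * br q s (2 * k - n)) • e n k)
    (h2 : ∀ k : ℤ, 0 ≤ k → k ≤ n →
      T2 (e n k) = (s ^ (2 * k - n) + s ^ ((n : ℤ) - 2 * k))⁻¹ •
        (br q s (2 * (n - k)) • e n (k + 1) - br q s (2 * k) • e n (k - 1))) :
    ∀ p : Submodule ℂ (Fin (n + 1) → ℂ),
      (∀ v ∈ p, T1 v ∈ p) → (∀ v ∈ p, T2 v ∈ p) → p = ⊥ ∨ p = ⊤ := by
  intro p hp1 hp2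
  have hT1 (i : Fin (n + 1)) :
      T1 (Pi.single i 1) = (Complex.I * br q s (2 * (i : ℕ) - n)) • Pi.single i 1 := by
    rw [← e_natCast]; exact h1 _ (by positivity) (by have := i.isLt; omega)
  have hμ : Function.Injective fun i : Fin (n + 1) => Complex.I * br q s (2 * (i : ℕ) - n) :=
    fun i j hij => Fin.ext <| by
      have := br_two_mul_sub_injective hq0 hroot hs n (mul_left_cancel₀ Complex.I_ne_zero hij)
      omega
  have hsum (k : ℤ) : s ^ (2 * k - n) + s ^ ((n : ℤ) - 2 * k) ≠ 0 := by
    simpa [neg_sub] using zpow_add_zpow_neg_ne_zero_of_sq_eq hq0 hroot hs (2 * k - n)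
  refine eq_bot_or_eq_top_of_ladder
    (fun v hv j hj => single_one_mem_of_apply_ne_zero hμ hT1 hp1 hv hj) hp2
    (fun k => ?_) (fun k => ?_)
  · rw [← e_natCast, h2 _ (by positivity) (by omega)]
    simpa [e, show (k : ℤ) + 1 ≠ k - 1 by omega] using
      ⟨hsum _, br_two_mul_ne_zero hq0 hroot hs (by omega)⟩
  · rw [← e_natCast, h2 _ (by positivity) (by omega)]
    simpa [e, show (k : ℤ) ≠ k + 1 + 1 by omega] using
      ⟨hsum _, br_two_mul_ne_zero hq0 hroot hs (by omega)⟩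
end
end

section
/- For half-integer l with 2l odd, consider the representation R_l^{(i)} on the space with basis |m⟩, m = −l,…,l, given by R(I1)|m⟩ = −((q^m + q^{-m})/(q − q^{-1}))|m⟩ and R(I2)|m⟩ = i([l−m]/(q^m − q^{-m}))|m+1⟩ + i([l+m]/(q^m − q^{-m}))|m−1⟩. Then the subspace V₁ spanned by the vectors |1/2⟩ + i|−1/2⟩, |3/2⟩ − i|−3/2⟩, |5/2⟩ + i|−5/2⟩, …, i.e. |m⟩ + i(−1)^{m−1/2}|−m⟩ for m = 1/2, 3/2, …, l, is invariant under both R(I1) and R(I2). -/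
noncomputable section

lemma e_zero (n : ℕ) (k : ℤ) (h : k < 0 ∨ (n : ℤ) < k) : e n k = 0 := by
  funext j
  simp only [e, Pi.zero_apply, ite_eq_right_iff]
  intro hj
  have hj' := j.isLt
  omega

/-- For `2l` odd (`n = 2l`), in the representation `R_l^{(i)}` the subspace `V₁`
spanned by the vectors `|m⟩ + i(−1)^{m-1/2}|−m⟩`, `m = 1/2, 3/2, …, l`
(here `|m⟩ = e n k` with `m = k - l`, so `m ≥ 1/2 ↔ n < 2k`, `|−m⟩ = e n (n-k)`,
and `(−1)^{m-1/2} = (−1)^{(2k-n-1)/2}`) is invariant under `R(I1)` and `R(I2)`. -/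
theorem stmt_8 (q s : ℂ) (hq0 : q ≠ 0)
    (hroot : ∀ k : ℕ, 0 < k → q ^ k ≠ 1) (hs : s ^ 2 = q)
    (n : ℕ) (hn : Odd n)
    (T1 T2 : Module.End ℂ (Fin (n + 1) → ℂ))
    (h1 : ∀ k : ℤ, 0 ≤ k → k ≤ n →
      T1 (e n k) = (-((s ^ (2 * k - n) + s ^ ((n : ℤ) - 2 * k)) / (q - q⁻¹))) • e n k)
    (h2 : ∀ k : ℤ, 0 ≤ k → k ≤ n →
      T2 (e n k) =
        (Complex.I * br q s (2 * (n - k)) / (s ^ (2 * k - n) - s ^ ((n : ℤ) - 2 * k)))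
            • e n (k + 1) +
        (Complex.I * br q s (2 * k) / (s ^ (2 * k - n) - s ^ ((n : ℤ) - 2 * k)))
            • e n (k - 1)) :
    ∀ v ∈ Submodule.span ℂ
        {v : Fin (n + 1) → ℂ | ∃ k : ℤ, (n : ℤ) < 2 * k ∧ k ≤ n ∧
          v = e n k + (Complex.I * (-1 : ℂ) ^ ((2 * k - n - 1) / 2)) • e n (n - k)},
      T1 v ∈ Submodule.span ℂ
        {v : Fin (n + 1) → ℂ | ∃ k : ℤ, (n : ℤ) < 2 * k ∧ k ≤ n ∧
          v = e n k + (Complex.I * (-1 : ℂ) ^ ((2 * k - n - 1) / 2)) • e n (n - k)} ∧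
      T2 v ∈ Submodule.span ℂ
        {v : Fin (n + 1) → ℂ | ∃ k : ℤ, (n : ℤ) < 2 * k ∧ k ≤ n ∧
          v = e n k + (Complex.I * (-1 : ℂ) ^ ((2 * k - n - 1) / 2)) • e n (n - k)} := by
  set G : Set (Fin (n + 1) → ℂ) :=
    {v : Fin (n + 1) → ℂ | ∃ k : ℤ, (n : ℤ) < 2 * k ∧ k ≤ n ∧
      v = e n k + (Complex.I * (-1 : ℂ) ^ ((2 * k - n - 1) / 2)) • e n (n - k)} with hG
  set S := Submodule.span ℂ G with hS
  -- any "generator-shaped" vector (possibly out of range) lies in S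
  have hgen : ∀ k : ℤ, (n : ℤ) < 2 * k →
      e n k + (Complex.I * (-1 : ℂ) ^ ((2 * k - (n : ℤ) - 1) / 2)) • e n ((n : ℤ) - k) ∈ S := by
    intro k hk
    by_cases hkn : k ≤ (n : ℤ)
    · exact Submodule.subset_span ⟨k, hk, hkn, rfl⟩
    · rw [e_zero n k (Or.inr (by omega)), e_zero n ((n : ℤ) - k) (Or.inl (by omega))]
      simp
  have key1 : ∀ k : ℤ, (n : ℤ) < 2 * k → k ≤ (n : ℤ) →
      T1 (e n k + (Complex.I * (-1 : ℂ) ^ ((2 * k - (n : ℤ) - 1) / 2)) • e n ((n : ℤ) - k)) ∈ S := by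
    intro k hk hkn
    set c : ℂ := Complex.I * (-1 : ℂ) ^ ((2 * k - (n : ℤ) - 1) / 2) with hc
    have hT1 : T1 (e n k + c • e n ((n : ℤ) - k)) =
        (-((s ^ (2 * k - (n : ℤ)) + s ^ ((n : ℤ) - 2 * k)) / (q - q⁻¹))) •
          (e n k + c • e n ((n : ℤ) - k)) := by
      rw [map_add, map_smul, h1 k (by omega) hkn, h1 ((n : ℤ) - k) (by omega) (by omega),
        show 2 * ((n : ℤ) - k) - (n : ℤ) = (n : ℤ) - 2 * k from by ring,
        show (n : ℤ) - 2 * ((n : ℤ) - k) = 2 * k - (n : ℤ) from by ring]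
      module
    rw [hT1]
    exact Submodule.smul_mem _ _ (hgen k hk)
  have key2 : ∀ k : ℤ, (n : ℤ) < 2 * k → k ≤ (n : ℤ) →
      T2 (e n k + (Complex.I * (-1 : ℂ) ^ ((2 * k - (n : ℤ) - 1) / 2)) • e n ((n : ℤ) - k)) ∈ S := by
    intro k hk hkn
    set c : ℂ := Complex.I * (-1 : ℂ) ^ ((2 * k - (n : ℤ) - 1) / 2) with hc
    have hcc : Complex.I * (-1 : ℂ) ^ ((2 * (k + 1) - (n : ℤ) - 1) / 2) = -c := by
      have ht : (2 * (k + 1) - (n : ℤ) - 1) / 2 = (2 * k - (n : ℤ) - 1) / 2 + 1 := by omega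
      rw [ht, zpow_add_one₀ (by norm_num : (-1 : ℂ) ≠ 0), hc]; ring
    have hcm : Complex.I * (-1 : ℂ) ^ ((2 * (k - 1) - (n : ℤ) - 1) / 2) = -c := by
      have ht : (2 * (k - 1) - (n : ℤ) - 1) / 2 = (2 * k - (n : ℤ) - 1) / 2 - 1 := by omega
      rw [ht, zpow_sub_one₀ (by norm_num : (-1 : ℂ) ≠ 0), inv_neg_one, hc]; ring
    have hr : ((-1 : ℂ) ^ ((2 * k - (n : ℤ) - 1) / 2)) = 1 ∨
        ((-1 : ℂ) ^ ((2 * k - (n : ℤ) - 1) / 2)) = -1 := by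
      rcases Int.even_or_odd ((2 * k - (n : ℤ) - 1) / 2) with h | h
      · exact Or.inl (Even.neg_one_zpow h)
      · exact Or.inr (Odd.neg_one_zpow h)
    have hc2 : c * c = -1 := by
      rcases hr with h | h <;> rw [hc, h] <;>
        simp [Complex.I_mul_I] <;> ring_nf <;> simp [Complex.I_sq]
    have hT2 : T2 (e n k + c • e n ((n : ℤ) - k)) =
        (Complex.I * br q s (2 * ((n : ℤ) - k)) /
            (s ^ (2 * k - (n : ℤ)) - s ^ ((n : ℤ) - 2 * k))) •
          (e n (k + 1) + (-c) • e n ((n : ℤ) - (k + 1))) +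
        (Complex.I * br q s (2 * k) /
            (s ^ (2 * k - (n : ℤ)) - s ^ ((n : ℤ) - 2 * k))) •
          (e n (k - 1) + (-c) • e n ((n : ℤ) - (k - 1))) := by
      rw [map_add, map_smul, h2 k (by omega) hkn, h2 ((n : ℤ) - k) (by omega) (by omega),
        show 2 * ((n : ℤ) - k) - (n : ℤ) = (n : ℤ) - 2 * k from by ring,
        show (n : ℤ) - 2 * ((n : ℤ) - k) = 2 * k - (n : ℤ) from by ring,
        show 2 * ((n : ℤ) - ((n : ℤ) - k)) = 2 * k from by ring,
        show (n : ℤ) - k + 1 = (n : ℤ) - (k - 1) from by ring,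
        show (n : ℤ) - k - 1 = (n : ℤ) - (k + 1) from by ring,
        show s ^ ((n : ℤ) - 2 * k) - s ^ (2 * k - (n : ℤ)) =
          -(s ^ (2 * k - (n : ℤ)) - s ^ ((n : ℤ) - 2 * k)) from (neg_sub _ _).symm]
      simp only [div_neg]
      module
    rw [hT2]
    refine Submodule.add_mem _ (Submodule.smul_mem _ _ ?_) (Submodule.smul_mem _ _ ?_)
    · rw [show (-c : ℂ) = Complex.I * (-1 : ℂ) ^ ((2 * (k + 1) - (n : ℤ) - 1) / 2) from hcc.symm]
      exact hgen (k + 1) (by omega)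
    · rcases lt_or_ge (n : ℤ) (2 * (k - 1)) with hlow | hlow
      · rw [show (-c : ℂ) = Complex.I * (-1 : ℂ) ^ ((2 * (k - 1) - (n : ℤ) - 1) / 2) from hcm.symm]
        exact hgen (k - 1) hlow
      · obtain ⟨m, hm⟩ := hn
        have hk1 : k - 1 = (n : ℤ) - k := by omega
        have hk2' : (n : ℤ) - (k - 1) = k := by omega
        have hw : e n (k - 1) + (-c) • e n ((n : ℤ) - (k - 1)) =
            (-c) • (e n k + c • e n ((n : ℤ) - k)) := by
          rw [hk2', hk1, smul_add, smul_smul, neg_mul, hc2, neg_neg, one_smul]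
          exact add_comm _ _
        rw [hw]
        exact Submodule.smul_mem _ _ (hgen k hk)
  intro v hv
  constructor
  · have hsub : G ⊆ (S.comap T1 : Set (Fin (n + 1) → ℂ)) := by
      rintro w ⟨k, hk1, hk2, rfl⟩
      exact key1 k hk1 hk2
    exact Submodule.span_le.2 hsub hv
  · have hsub : G ⊆ (S.comap T2 : Set (Fin (n + 1) → ℂ)) := by
      rintro w ⟨k, hk1, hk2, rfl⟩
      exact key2 k hk1 hk2
    exact Submodule.span_le.2 hsub hv
end
end

section
/- Let q be a primitive p-th root of unity with p odd, p = p' ≥ 3, and let a, b, λ ∈ ℂ with λ ≠ 0. On the p'-dimensional space with basis |j⟩, j = 0,…,p'−1, the operators T(q^H)|i⟩ = q^{-i}λ|i⟩, T(F)|i⟩ = |i+1⟩ for i < p'−1, T(F)|p'−1⟩ = b|0⟩, T(E)|0⟩ = a|p'−1⟩, T(E)|i⟩ = (ab + [i](λ²q^{1−i} − λ⁻²q^{i−1})/(q − q^{-1}))|i−1⟩ for i > 0, satisfy the U_q(sl_2) relations: T(q^H)T(E)T(q^H)⁻¹ = qT(E), T(q^H)T(F)T(q^H)⁻¹ = q⁻¹T(F),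 and T(E)T(F) − T(F)T(E) = (T(q^H)² − T(q^H)⁻²)/(q − q^{-1}). -/
/-!
`T(q^H)` is diagonal with weights `w_i = q^{-i} λ`, while `T(E)` and `T(F)` shift the basis
cyclically down and up. Conjugating a shift by `T(q^H)` multiplies it by the ratio of neighbouring
weights, which is `q^{±1}` also across the wrap-around because `q^p = 1`. The commutator
`[T(E), T(F)]` is diagonal with entries `c_{i+1} - c_i`, where `c_i` is the coefficient of
`T(E)|i⟩`; the corner coefficients fit the same formula since `[0] = [p] = 0` gives
`c_0 = c_p = ab`, and a direct computation gives `c_{i+1} - c_i = (w_i² - w_i⁻²)/(q - q⁻¹)` for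
every integer `i`.
-/

noncomputable section

/-- Basis vector of `Fin p → ℂ` indexed by an integer `k ∈ {0, …, p-1}`. -/
def ep (p : ℕ) (k : ℤ) : Fin p → ℂ := fun j => if (j : ℤ) = k then 1 else 0

/-- The `q`-number `[t] = (q^t - q^{-t})/(q - q⁻¹)`. -/
def qnum (q : ℂ) (t : ℤ) : ℂ := (q ^ t - q ^ (-t)) / (q - q⁻¹)

section EndLemmas

variable {k M : Type*} [Field k] [AddCommGroup M] [Module k M]

theorem Module.End.apply_eq_inv_smul_of_mul_eq_one {A B : Module.End k M} (hBA : B * A = 1)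
    {v : M} {c : k} (hc : c ≠ 0) (hAv : A v = c • v) : B v = c⁻¹ • v :=
  calc B v = B (c⁻¹ • A v) := by rw [hAv, inv_smul_smul₀ hc]
    _ = c⁻¹ • v := by rw [map_smul, ← Module.End.mul_apply, hBA, Module.End.one_apply]

theorem Module.End.mul_mul_apply_of_eigen {A B X : Module.End k M} {v w : M} {c r x : k}
    (hc : c ≠ 0) (hBv : B v = c⁻¹ • v) (hXv : X v = x • w) (hAw : A w = (r * c) • w) :
    (A * X * B) v = r • X v := by
  simp only [Module.End.mul_apply, hBv, map_smul, hXv, hAw, smul_smul]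
  congr 1
  field_simp

theorem Module.End.commutator_apply_of_shift {E F : Module.End k M} {u v w : M} {e e' f f' : k}
    (hFv : F v = f • w) (hEw : E w = e • v) (hEv : E v = e' • u) (hFu : F u = f' • v) :
    (E * F - F * E) v = (f * e - e' * f') • v := by
  simp only [LinearMap.sub_apply, Module.End.mul_apply, hFv, hEw, hEv, hFu, map_smul, smul_smul,
    sub_smul]

end EndLemmas

theorem ep_natCast {p : ℕ} (j : Fin p) : ep p j = Pi.single j 1 := by
  ext j'
  simp [ep, Pi.single_apply, Fin.ext_iff]

theorem Module.End.ext_ep {p : ℕ} {f g : Module.End ℂ (Fin p → ℂ)}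
    (h : ∀ i : ℤ, 0 ≤ i → i < p → f (ep p i) = g (ep p i)) : f = g :=
  (Pi.basisFun ℂ (Fin p)).ext fun j => by
    simpa [ep_natCast] using h j j.val.cast_nonneg (by exact_mod_cast j.isLt)

def weight (q lam : ℂ) (t : ℤ) : ℂ := q ^ (-t) * lam

def eCoeff (q a b lam : ℂ) (t : ℤ) : ℂ :=
  a * b + qnum q t * (lam ^ 2 * q ^ (1 - t) - (lam⁻¹) ^ 2 * q ^ (t - 1)) / (q - q⁻¹)

theorem weight_ne_zero {q lam : ℂ} (hq : q ≠ 0) (hlam : lam ≠ 0) (t : ℤ) : weight q lam t ≠ 0 :=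
  mul_ne_zero (zpow_ne_zero _ hq) hlam

theorem weight_sub_one {q : ℂ} (hq : q ≠ 0) (lam : ℂ) (t : ℤ) :
    weight q lam (t - 1) = q * weight q lam t := by
  rw [weight, weight, neg_sub, zpow_sub₀ hq, zpow_one, zpow_neg]
  field_simp

theorem weight_add_one {q : ℂ} (hq : q ≠ 0) (lam : ℂ) (t : ℤ) :
    weight q lam (t + 1) = q⁻¹ * weight q lam t := by
  rw [weight, weight, neg_add, zpow_add₀ hq, zpow_neg_one, mul_comm (q ^ (-t)), mul_assoc]

theorem weight_add_natCast {p : ℕ} {q : ℂ} (hqp : q ^ p = 1) (hq : q ≠ 0) (lam : ℂ) (t : ℤ) :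
    weight q lam (t + p) = weight q lam t := by
  rw [weight, weight, neg_add, zpow_add₀ hq, zpow_neg q (p : ℤ), zpow_natCast, hqp,
    inv_one, mul_one]

theorem qnum_zero (q : ℂ) : qnum q 0 = 0 := by simp [qnum]

theorem qnum_natCast_of_pow_eq_one {p : ℕ} {q : ℂ} (hqp : q ^ p = 1) : qnum q p = 0 := by
  simp [qnum, hqp]

theorem eCoeff_zero (q a b lam : ℂ) : eCoeff q a b lam 0 = a * b := by
  simp [eCoeff, qnum_zero]

theorem eCoeff_natCast_of_pow_eq_one {p : ℕ} {q : ℂ} (hqp : q ^ p = 1) (a b lam : ℂ) :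
    eCoeff q a b lam p = a * b := by
  simp [eCoeff, qnum_natCast_of_pow_eq_one hqp]

theorem eCoeff_add_one_sub {q : ℂ} (hq : q ≠ 0) (hq2 : q ^ 2 ≠ 1) (a b lam : ℂ) (t : ℤ) :
    eCoeff q a b lam (t + 1) - eCoeff q a b lam t =
      (q - q⁻¹)⁻¹ * (weight q lam t ^ 2 - (weight q lam t)⁻¹ ^ 2) := by
  have hqt : q ^ t ≠ 0 := zpow_ne_zero t hq
  have hq2' : q ^ 2 - 1 ≠ 0 := sub_ne_zero.mpr hq2
  have hd : q - q⁻¹ = (q ^ 2 - 1) / q := by field_simp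
  simp only [eCoeff, qnum, weight, hd, zpow_add₀ hq, zpow_sub₀ hq, zpow_neg, zpow_one, mul_inv,
    inv_inv]
  field_simp
  ring

structure IsPeriodicRep (p : ℕ) (q a b lam : ℂ) (K E F : Module.End ℂ (Fin p → ℂ)) : Prop where
  K_ep : ∀ i : ℤ, 0 ≤ i → i < p → K (ep p i) = weight q lam i • ep p i
  F_ep : ∀ i : ℤ, 0 ≤ i → i < (p : ℤ) - 1 → F (ep p i) = ep p (i + 1)
  F_ep_last : F (ep p ((p : ℤ) - 1)) = b • ep p 0
  E_ep_zero : E (ep p 0) = a • ep p ((p : ℤ) - 1)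
  E_ep : ∀ i : ℤ, 0 < i → i < p → E (ep p i) = eCoeff q a b lam i • ep p (i - 1)

namespace IsPeriodicRep

variable {p : ℕ} {q a b lam : ℂ} {K Kinv E F : Module.End ℂ (Fin p → ℂ)}

theorem Kinv_ep (h : IsPeriodicRep p q a b lam K E F) (hq : q ≠ 0) (hlam : lam ≠ 0)
    (hKinv : Kinv * K = 1) {i : ℤ} (hi0 : 0 ≤ i) (hip : i < p) :
    Kinv (ep p i) = (weight q lam i)⁻¹ • ep p i :=
  Module.End.apply_eq_inv_smul_of_mul_eq_one hKinv (weight_ne_zero hq hlam i) (h.K_ep i hi0 hip)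

theorem conj_E (h : IsPeriodicRep p q a b lam K E F) (hqp : q ^ p = 1) (hlam : lam ≠ 0)
    (hKinv : Kinv * K = 1) : K * E * Kinv = q • E := by
  refine Module.End.ext_ep fun i hi0 hip => ?_
  have hq : q ≠ 0 := (IsUnit.of_pow_eq_one hqp (by omega)).ne_zero
  have hKinv_i := h.Kinv_ep hq hlam hKinv hi0 hip
  rw [LinearMap.smul_apply]
  rcases hi0.eq_or_lt with rfl | hi0
  · have hw : weight q lam ((p : ℤ) - 1) = q * weight q lam 0 := by
      rw [show (p : ℤ) - 1 = 0 - 1 + p by ring, weight_add_natCast hqp hq, weight_sub_one hq]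
    refine Module.End.mul_mul_apply_of_eigen (weight_ne_zero hq hlam 0) hKinv_i h.E_ep_zero ?_
    rw [h.K_ep _ (by omega) (by omega), hw]
  · refine Module.End.mul_mul_apply_of_eigen (weight_ne_zero hq hlam i) hKinv_i
      (h.E_ep i hi0 hip) ?_
    rw [h.K_ep _ (by omega) (by omega), weight_sub_one hq]

theorem conj_F (h : IsPeriodicRep p q a b lam K E F) (hqp : q ^ p = 1) (hlam : lam ≠ 0)
    (hKinv : Kinv * K = 1) : K * F * Kinv = q⁻¹ • F := by
  refine Module.End.ext_ep fun i hi0 hip => ?_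
  have hq : q ≠ 0 := (IsUnit.of_pow_eq_one hqp (by omega)).ne_zero
  have hKinv_i := h.Kinv_ep hq hlam hKinv hi0 hip
  rw [LinearMap.smul_apply]
  rcases (Int.le_sub_one_of_lt hip).eq_or_lt with rfl | hlt
  · have hw : weight q lam 0 = q⁻¹ * weight q lam ((p : ℤ) - 1) := by
      rw [← weight_add_one hq, sub_add_cancel, ← zero_add (p : ℤ), weight_add_natCast hqp hq]
    refine Module.End.mul_mul_apply_of_eigen (weight_ne_zero hq hlam _) hKinv_i h.F_ep_last ?_
    rw [h.K_ep 0 le_rfl (by omega), hw]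
  · refine Module.End.mul_mul_apply_of_eigen (weight_ne_zero hq hlam i) hKinv_i
      (x := 1) (by rw [one_smul, h.F_ep i hi0 hlt]) ?_
    rw [h.K_ep _ (by omega) (by omega), weight_add_one hq]

theorem commutator (h : IsPeriodicRep p q a b lam K E F) (hp : 2 ≤ p) (hqp : q ^ p = 1)
    (hq2 : q ^ 2 ≠ 1) (hlam : lam ≠ 0) (hKinv : Kinv * K = 1) :
    E * F - F * E = (q - q⁻¹)⁻¹ • (K ^ 2 - Kinv ^ 2) := by
  refine Module.End.ext_ep fun i hi0 hip => ?_
  have hq : q ≠ 0 := (IsUnit.of_pow_eq_one hqp (by omega)).ne_zero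
  have hrhs : ((q - q⁻¹)⁻¹ • (K ^ 2 - Kinv ^ 2)) (ep p i) =
      (eCoeff q a b lam (i + 1) - eCoeff q a b lam i) • ep p i := by
    simp only [LinearMap.smul_apply, LinearMap.sub_apply, sq, Module.End.mul_apply,
      h.K_ep i hi0 hip, h.Kinv_ep hq hlam hKinv hi0 hip, map_smul, smul_smul, ← sub_smul,
      eCoeff_add_one_sub hq hq2]
  rw [hrhs]
  rcases hi0.eq_or_lt with rfl | hi0
  · rw [Module.End.commutator_apply_of_shift (f := 1)
      (by rw [one_smul, h.F_ep 0 le_rfl (by omega)])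
      (by rw [h.E_ep (0 + 1) (by omega) (by omega), add_sub_cancel_right]) h.E_ep_zero h.F_ep_last,
      eCoeff_zero]
    congr 1
    ring
  rcases (Int.le_sub_one_of_lt hip).eq_or_lt with rfl | hlt
  · rw [Module.End.commutator_apply_of_shift h.F_ep_last h.E_ep_zero (h.E_ep _ hi0 hip) (f' := 1)
      (by rw [one_smul, h.F_ep _ (by omega) (by omega), sub_add_cancel]),
      sub_add_cancel, eCoeff_natCast_of_pow_eq_one hqp]
    congr 1
    ring
  · rw [Module.End.commutator_apply_of_shift (f := 1) (f' := 1)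
      (by rw [one_smul, h.F_ep i hi0.le hlt])
      (by rw [h.E_ep (i + 1) (by omega) (by omega), add_sub_cancel_right]) (h.E_ep _ hi0 hip)
      (by rw [one_smul, h.F_ep _ (by omega) (by omega), sub_add_cancel])]
    congr 1
    ring

end IsPeriodicRep

theorem stmt_16_general (p : ℕ) (hp3 : 3 ≤ p) (q : ℂ)
    (hqp : q ^ p = 1) (hprim : ∀ k : ℕ, 0 < k → k < p → q ^ k ≠ 1)
    (a b lam : ℂ) (hlam : lam ≠ 0)
    (Tk TkInv TE TF : Module.End ℂ (Fin p → ℂ))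
    (hiK : TkInv * Tk = 1)
    (hK : ∀ i : ℤ, 0 ≤ i → i < p → Tk (ep p i) = (q ^ (-i) * lam) • ep p i)
    (hF1 : ∀ i : ℤ, 0 ≤ i → i < (p : ℤ) - 1 → TF (ep p i) = ep p (i + 1))
    (hF2 : TF (ep p ((p : ℤ) - 1)) = b • ep p 0)
    (hE0 : TE (ep p 0) = a • ep p ((p : ℤ) - 1))
    (hE : ∀ i : ℤ, 0 < i → i < p →
      TE (ep p i) = (a * b + qnum q i *
        (lam ^ 2 * q ^ (1 - i) - (lam⁻¹) ^ 2 * q ^ (i - 1)) / (q - q⁻¹)) • ep p (i - 1)) :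
    Tk * TE * TkInv = q • TE ∧ Tk * TF * TkInv = q⁻¹ • TF ∧
    TE * TF - TF * TE = (q - q⁻¹)⁻¹ • (Tk ^ 2 - TkInv ^ 2) := by
  have hrep : IsPeriodicRep p q a b lam Tk TE TF := ⟨hK, hF1, hF2, hE0, hE⟩
  exact ⟨hrep.conj_E hqp hlam hiK, hrep.conj_F hqp hlam hiK,
    hrep.commutator (by omega) hqp (hprim 2 two_pos (by omega)) hlam hiK⟩

/-- For `q` a primitive `p`-th root of unity, `p` odd, `p = p' ≥ 3`, the
operators of the representation `T_{abλ}` on the `p'`-dimensional space satisfy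
the `U_q(sl_2)` relations. -/
theorem stmt_16 (p : ℕ) (hp3 : 3 ≤ p) (hpodd : Odd p) (q : ℂ)
    (hqp : q ^ p = 1) (hprim : ∀ k : ℕ, 0 < k → k < p → q ^ k ≠ 1)
    (a b lam : ℂ) (hlam : lam ≠ 0)
    (Tk TkInv TE TF : Module.End ℂ (Fin p → ℂ))
    (hKi : Tk * TkInv = 1) (hiK : TkInv * Tk = 1)
    (hK : ∀ i : ℤ, 0 ≤ i → i < p → Tk (ep p i) = (q ^ (-i) * lam) • ep p i)
    (hF1 : ∀ i : ℤ, 0 ≤ i → i < (p : ℤ) - 1 → TF (ep p i) = ep p (i + 1))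
    (hF2 : TF (ep p ((p : ℤ) - 1)) = b • ep p 0)
    (hE0 : TE (ep p 0) = a • ep p ((p : ℤ) - 1))
    (hE : ∀ i : ℤ, 0 < i → i < p →
      TE (ep p i) = (a * b + qnum q i *
        (lam ^ 2 * q ^ (1 - i) - (lam⁻¹) ^ 2 * q ^ (i - 1)) / (q - q⁻¹)) • ep p (i - 1)) :
    Tk * TE * TkInv = q • TE ∧ Tk * TF * TkInv = q⁻¹ • TF ∧
    TE * TF - TF * TE = (q - q⁻¹)⁻¹ • (Tk ^ 2 - TkInv ^ 2) :=
  stmt_16_general p hp3 q hqp hprim a b lam hlam Tk TkInv TE TF hiK hK hF1 hF2 hE0 hE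
end
end
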